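/- arXiv:1509.05661 — 6 statements merged into one kernel-verified Lean document; each statement's English description precedes it below -/
import Mathlib

section
/- The function v₁(x₁,x₂) defined as g(x₁) + x₂²/g(x₁) when |x₂| < g(x₁) and as 2|x₂| when |x₂| ≥ g(x₁) is convex on ℝ², where g is a smooth convex function with g(t) = 1/2 for t ≤ 0 and g(t) = t^α for t ≥ 1, with α > 1. -/
/-- The piecewise function v₁ is convex on ℝ². -/
theorem stmt_0 (α : ℝ) (hα : 1 < α) (g : ℝ → ℝ)
    (hg_smooth : ContDiff ℝ (⊤ : ℕ∞) g) (hg_convex : ConvexOn ℝ Set.univ g)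
    (hg_left : ∀ t : ℝ, t ≤ 0 → g t = 1 / 2)
    (hg_right : ∀ t : ℝ, 1 ≤ t → g t = t ^ α)
    (hg_pos : ∀ t : ℝ, 0 < g t)
    (v : ℝ × ℝ → ℝ)
    (hv : ∀ p : ℝ × ℝ, v p = if |p.2| < g p.1 then g p.1 + p.2 ^ 2 / g p.1 else 2 * |p.2|) :
    ConvexOn ℝ Set.univ v := by
  -- lower bound: every member of the affine family is ≤ v
  have key : ∀ p : ℝ × ℝ, ∀ s : ℝ, |s| ≤ 1 →
      (1 - s ^ 2) * g p.1 + 2 * s * p.2 ≤ v p := by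
    intro p s hs
    rw [hv p]
    have hg := hg_pos p.1
    rcases abs_le.mp hs with ⟨h1, h2⟩
    by_cases h : |p.2| < g p.1
    · rw [if_pos h]
      have h3 : 0 ≤ (p.2 - s * g p.1) ^ 2 / g p.1 := by positivity
      have h4 : p.2 ^ 2 / g p.1 - 2 * s * p.2 + s ^ 2 * g p.1
          = (p.2 - s * g p.1) ^ 2 / g p.1 := by
        field_simp; ring
      nlinarith [h3, h4]
    · rw [if_neg h]
      push_neg at h
      rcases abs_cases p.2 with ⟨he, hp⟩ | ⟨he, hp⟩ <;> rw [he] at h ⊢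
      · have hb : (0:ℝ) ≤ 2 * p.2 - (1 + s) * g p.1 := by nlinarith
        nlinarith [mul_nonneg (by linarith : (0:ℝ) ≤ 1 - s) hb]
      · have hb : (0:ℝ) ≤ -2 * p.2 - (1 - s) * g p.1 := by nlinarith
        nlinarith [mul_nonneg (by linarith : (0:ℝ) ≤ 1 + s) hb]
  -- attainment: v p equals some member of the family
  have att : ∀ p : ℝ × ℝ, ∃ s : ℝ, |s| ≤ 1 ∧
      v p = (1 - s ^ 2) * g p.1 + 2 * s * p.2 := by
    intro p
    have hg := hg_pos p.1
    by_cases h : |p.2| < g p.1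
    · refine ⟨p.2 / g p.1, ?_, ?_⟩
      · rw [abs_div, abs_of_pos hg]
        exact (div_le_one hg).mpr h.le
      · rw [hv p, if_pos h]
        field_simp
        ring
    · push_neg at h
      refine ⟨if 0 ≤ p.2 then 1 else -1, ?_, ?_⟩
      · split <;> simp
      · rw [hv p, if_neg (not_lt.mpr h)]
        by_cases hy : 0 ≤ p.2
        · rw [if_pos hy, abs_of_nonneg hy]; ring
        · rw [if_neg hy, abs_of_neg (lt_of_not_ge hy)]; ring
  refine ⟨convex_univ, ?_⟩
  intro x _ y _ a b ha hb hab
  obtain ⟨s, hs, he⟩ := att (a • x + b • y)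
  have hz1 : (a • x + b • y).1 = a * x.1 + b * y.1 := rfl
  have hz2 : (a • x + b • y).2 = a * x.2 + b * y.2 := rfl
  have hgc := hg_convex.2 (Set.mem_univ x.1) (Set.mem_univ y.1) ha hb hab
  simp only [smul_eq_mul] at hgc
  have h1 := key x s hs
  have h2 := key y s hs
  have hs2 : s ^ 2 ≤ 1 := by
    rcases abs_le.mp hs with ⟨l, r⟩
    nlinarith
  have h1' := mul_le_mul_of_nonneg_left h1 ha
  have h2' := mul_le_mul_of_nonneg_left h2 hb
  have h3' := mul_le_mul_of_nonneg_left hgc (by linarith : (0:ℝ) ≤ 1 - s ^ 2)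
  calc v (a • x + b • y) = (1 - s ^ 2) * g ((a • x + b • y).1)
        + 2 * s * ((a • x + b • y).2) := he
    _ = (1 - s ^ 2) * g (a * x.1 + b * y.1) + 2 * s * (a * x.2 + b * y.2) := by
        rw [hz1, hz2]
    _ ≤ a * v x + b * v y := by nlinarith [h1', h2', h3']
end

section
/- For |x₂| ≤ 2 and α > 1, v₁(2,x₂) − v₁(0,x₂) ≥ 2^{−α}(2^α − 2)², and this lower bound is strictly positive. -/
/-- for |x₂| ≤ 2 and α > 1, v₁(2,x₂) − v₁(0,x₂) ≥ 2^{-α}(2^α − 2)² > 0. -/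
theorem stmt_6 (α : ℝ) (hα : 1 < α) (g : ℝ → ℝ)
    (hg_smooth : ContDiff ℝ (⊤ : ℕ∞) g) (hg_convex : ConvexOn ℝ Set.univ g)
    (hg_left : ∀ t : ℝ, t ≤ 0 → g t = 1 / 2)
    (hg_right : ∀ t : ℝ, 1 ≤ t → g t = t ^ α)
    (hg_pos : ∀ t : ℝ, 0 < g t)
    (v₁ : ℝ × ℝ → ℝ)
    (hv₁ : ∀ p : ℝ × ℝ, v₁ p = if |p.2| < g p.1 then g p.1 + p.2 ^ 2 / g p.1 else 2 * |p.2|)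
    (hmono : ∀ y : ℝ, Monotone fun t => v₁ (t, y)) :
    (∀ y : ℝ, |y| ≤ 2 →
        (2 : ℝ) ^ (-α) * ((2 : ℝ) ^ α - 2) ^ 2 ≤ v₁ (2, y) - v₁ (0, y)) ∧
    0 < (2 : ℝ) ^ (-α) * ((2 : ℝ) ^ α - 2) ^ 2 := by
  set A : ℝ := (2 : ℝ) ^ α with hAdef
  have hA : 2 < A := by
    have : (2:ℝ) ^ (1:ℝ) < (2:ℝ) ^ α :=
      (Real.rpow_lt_rpow_left_iff (by norm_num : (1:ℝ) < 2)).mpr hα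
    simpa [Real.rpow_one] using this
  have hApos : (0:ℝ) < A := by linarith
  have hneg : (2:ℝ) ^ (-α) = A⁻¹ := by
    rw [Real.rpow_neg (by norm_num : (0:ℝ) ≤ 2)]
  have hg2 : g 2 = A := hg_right 2 (by norm_num)
  have hg0 : g 0 = 1 / 2 := hg_left 0 le_rfl
  constructor
  · intro y hy
    have hv2 : v₁ (2, y) = A + y ^ 2 / A := by
      rw [hv₁]; simp only [hg2]
      rw [if_pos (by linarith)]
    rw [hneg, hv2, hv₁]
    simp only [hg0]
    have hsq : |y| ^ 2 = y ^ 2 := sq_abs y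
    have hyn : 0 ≤ |y| := abs_nonneg y
    have hdiv : y ^ 2 / A * A = y ^ 2 := div_mul_cancel₀ _ (ne_of_gt hApos)
    by_cases hc : |y| < 1 / 2
    · rw [if_pos hc]
      have h12 : y ^ 2 / (1/2 : ℝ) = 2 * y ^ 2 := by ring
      have hy2 : y ^ 2 < 1 / 4 := by nlinarith
      rw [h12, inv_mul_eq_div, div_le_iff₀ hApos]
      nlinarith [hdiv, hy2, sq_nonneg y, mul_lt_mul_of_pos_right hy2 (by linarith : (0:ℝ) < 2 * A - 1)]
    · rw [if_neg hc]
      push_neg at hc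
      rw [inv_mul_eq_div, div_le_iff₀ hApos]
      nlinarith [sq_nonneg y]
  · rw [hneg]
    exact mul_pos (inv_pos.mpr hApos) (pow_pos (by linarith) 2)
end

section
/- For n ≥ 3 and α ≥ n/(n−2), the radially symmetric function u(x',x_n) with u = h(r)^α + h(r)^{−α}x_n² for |x_n| < h(r)^α and u = 2|x_n| otherwise, where r = |x'| and h(r) = max(r−1,0), satisfies: in the region {r > 1, |x_n| < h(r)^α}, det D²u = 2α^{n−1}(α−1) h(r)^{α(n−2)−n} (1 − (x_n/h(r)^α)²)^{n−1} / r^{n−2}, and this is locally bounded. -/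
/-!
On the region `{r > 1, |xₙ| < h(r)^α}`, `u` agrees near each point with
`V(r, xₙ) = s^α + s^(-α) xₙ²`, `s = r - 1`, so its second-order data there are those of `V`.
For any `A(r) + C(r) xₙ²` the cylindrical Hessian is explicit, and for `V` both
`V_rr V_nn - V_rn² = 2α(α-1)(1 - q²)/s²` and `V_r = α s^(α-1)(1 - q²)`, `q = xₙ/s^α`,
carry the factor `1 - q²`, which yields the formula. Since `α ≥ n/(n-2)` means exactly that
the exponent `α(n-2) - n` is nonnegative, and `0 ≤ 1 - q² ≤ 1`, `r ≥ 1`, the determinant is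
bounded by its coefficient times `(R - 1)^(α(n-2)-n)` on `{r ≤ R}`.
-/

/-- Second-order partial derivative of U : ℝ × ℝ → ℝ in directions e, e'. -/
noncomputable def pd2 (U : ℝ × ℝ → ℝ) (e e' : ℝ × ℝ) (p : ℝ × ℝ) : ℝ :=
  fderiv ℝ (fun x => fderiv ℝ U x e) p e'

/-- The Hessian determinant, in cylindrical coordinates (r, xₙ), of the
rotationally symmetric function x ↦ U(|x'|, xₙ) on ℝⁿ:
(U_rr U_nn − U_rn²) · (U_r/r)^{n−2}. -/
noncomputable def cylDet (n : ℕ) (U : ℝ × ℝ → ℝ) (p : ℝ × ℝ) : ℝ :=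
  (pd2 U (1, 0) (1, 0) p * pd2 U (0, 1) (0, 1) p -
      pd2 U (1, 0) (0, 1) p * pd2 U (0, 1) (1, 0) p) *
    (fderiv ℝ U p (1, 0) / p.1) ^ (n - 2)

open Filter Topology Set ContinuousLinearMap

lemma hasDerivAt_sub_rpow_const (a c : ℝ) {x : ℝ} (hx : x ≠ a) :
    HasDerivAt (fun y : ℝ => (y - a) ^ c) (c * (x - a) ^ (c - 1)) x := by
  simpa using ((hasDerivAt_id x).sub_const a).rpow_const (Or.inl (sub_ne_zero.2 hx))

lemma cylDet_congr_of_eventuallyEq (n : ℕ) {U V : ℝ × ℝ → ℝ} {p : ℝ × ℝ}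
    (h : U =ᶠ[𝓝 p] V) : cylDet n U p = cylDet n V p := by
  have hpd2 (e e' : ℝ × ℝ) : pd2 U e e' p = pd2 V e e' p := by
    have he : (fun x => fderiv ℝ U x e) =ᶠ[𝓝 p] fun x => fderiv ℝ V x e := by
      filter_upwards [h.fderiv (𝕜 := ℝ)] with x hx
      rw [hx]
    rw [pd2, pd2, he.fderiv_eq]
  simp only [cylDet, hpd2, h.fderiv_eq]

lemma hasFDerivAt_add_mul_sq {A C : ℝ → ℝ} {a c : ℝ} {p : ℝ × ℝ}
    (hA : HasDerivAt A a p.1) (hC : HasDerivAt C c p.1) :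
    HasFDerivAt (fun q : ℝ × ℝ => A q.1 + C q.1 * q.2 ^ 2)
      ((a + c * p.2 ^ 2) • fst ℝ ℝ ℝ + (2 * C p.1 * p.2) • snd ℝ ℝ ℝ) p := by
  have hsq : HasFDerivAt (fun q : ℝ × ℝ => q.2 ^ 2) ((2 * p.2) • snd ℝ ℝ ℝ) p := by
    simpa [Function.comp_def] using (hasDerivAt_pow 2 p.2).comp_hasFDerivAt p hasFDerivAt_snd
  refine ((hA.comp_hasFDerivAt p hasFDerivAt_fst).add
    ((hC.comp_hasFDerivAt p hasFDerivAt_fst).mul hsq)).congr_fderiv ?_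
  ext <;> simp <;> ring

lemma hasFDerivAt_mul_snd {B : ℝ → ℝ} {b : ℝ} {p : ℝ × ℝ} (hB : HasDerivAt B b p.1) :
    HasFDerivAt (fun q : ℝ × ℝ => B q.1 * q.2)
      ((b * p.2) • fst ℝ ℝ ℝ + B p.1 • snd ℝ ℝ ℝ) p := by
  refine ((hB.comp_hasFDerivAt p hasFDerivAt_fst).mul hasFDerivAt_snd).congr_fderiv ?_
  ext <;> simp [mul_comm]

lemma cylDet_add_mul_sq (n : ℕ) {A A' C C' : ℝ → ℝ} {a₂ c₂ : ℝ} {p : ℝ × ℝ}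
    (hA : ∀ᶠ r in 𝓝 p.1, HasDerivAt A (A' r) r) (hA' : HasDerivAt A' a₂ p.1)
    (hC : ∀ᶠ r in 𝓝 p.1, HasDerivAt C (C' r) r) (hC' : HasDerivAt C' c₂ p.1) :
    cylDet n (fun q => A q.1 + C q.1 * q.2 ^ 2) p =
      ((a₂ + c₂ * p.2 ^ 2) * (2 * C p.1) - (2 * C' p.1 * p.2) ^ 2) *
        ((A' p.1 + C' p.1 * p.2 ^ 2) / p.1) ^ (n - 2) := by
  have hf : ∀ᶠ q in 𝓝 p, HasFDerivAt (fun q : ℝ × ℝ => A q.1 + C q.1 * q.2 ^ 2)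
      ((A' q.1 + C' q.1 * q.2 ^ 2) • fst ℝ ℝ ℝ + (2 * C q.1 * q.2) • snd ℝ ℝ ℝ) q :=
    ((continuous_fst.tendsto p).eventually (hA.and hC)).mono fun q hq =>
      hasFDerivAt_add_mul_sq hq.1 hq.2
  have hfst : (fun x => fderiv ℝ (fun q : ℝ × ℝ => A q.1 + C q.1 * q.2 ^ 2) x (1, 0)) =ᶠ[𝓝 p]
      fun q => A' q.1 + C' q.1 * q.2 ^ 2 := by
    filter_upwards [hf] with q hq
    simp [hq.fderiv]
  have hsnd : (fun x => fderiv ℝ (fun q : ℝ × ℝ => A q.1 + C q.1 * q.2 ^ 2) x (0, 1)) =ᶠ[𝓝 p]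
      fun q => 2 * C q.1 * q.2 := by
    filter_upwards [hf] with q hq
    simp [hq.fderiv]
  have hfst' := hasFDerivAt_add_mul_sq hA' hC'
  have hsnd' := hasFDerivAt_mul_snd (hC.self_of_nhds.const_mul 2)
  simp only [cylDet, pd2, hfst.fderiv_eq, hsnd.fderiv_eq, hfst'.fderiv, hsnd'.fderiv,
    hf.self_of_nhds.fderiv, add_apply, smul_apply, coe_fst', coe_snd',
    smul_eq_mul]
  ring

lemma cylDet_sub_one_rpow_add_mul_sq (α : ℝ) {n : ℕ} (hn : 2 ≤ n) {p : ℝ × ℝ} (hp : 1 < p.1) :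
    cylDet n (fun q => (q.1 - 1) ^ α + (q.1 - 1) ^ (-α) * q.2 ^ 2) p =
      2 * α ^ (n - 1) * (α - 1) * (p.1 - 1) ^ (α * ((n : ℝ) - 2) - n) *
        (1 - (p.2 / (p.1 - 1) ^ α) ^ 2) ^ (n - 1) / p.1 ^ (n - 2) := by
  have hderiv (c : ℝ) : ∀ᶠ r in 𝓝 p.1,
      HasDerivAt (fun y : ℝ => (y - 1) ^ c) (c * (r - 1) ^ (c - 1)) r :=
    eventually_of_mem (Ioi_mem_nhds hp) fun r hr => hasDerivAt_sub_rpow_const 1 c (ne_of_gt hr)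
  rw [cylDet_add_mul_sq n (hderiv α) ((hderiv (α - 1)).self_of_nhds.const_mul α)
    (hderiv (-α)) ((hderiv (-α - 1)).self_of_nhds.const_mul (-α))]
  have hs : 0 < p.1 - 1 := sub_pos.2 hp
  have hr : 0 < p.1 := by linarith
  have hA := Real.rpow_pos_of_pos hs α
  have hgrad : (α * (p.1 - 1) ^ (α - 1) + -α * (p.1 - 1) ^ (-α - 1) * p.2 ^ 2) / p.1 =
      α * (p.1 - 1) ^ α / ((p.1 - 1) * p.1) * (1 - (p.2 / (p.1 - 1) ^ α) ^ 2) := by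
    simp only [Real.rpow_sub_one hs.ne', Real.rpow_neg hs.le]
    field_simp
    ring
  have hhess : (α * ((α - 1) * (p.1 - 1) ^ (α - 1 - 1)) +
        -α * ((-α - 1) * (p.1 - 1) ^ (-α - 1 - 1)) * p.2 ^ 2) * (2 * (p.1 - 1) ^ (-α)) -
        (2 * (-α * (p.1 - 1) ^ (-α - 1)) * p.2) ^ 2 =
      2 * α * (α - 1) / (p.1 - 1) ^ 2 * (1 - (p.2 / (p.1 - 1) ^ α) ^ 2) := by
    simp only [Real.rpow_sub_one hs.ne', Real.rpow_neg hs.le]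
    field_simp
    ring
  rw [hgrad, hhess]
  obtain ⟨m, rfl⟩ : ∃ m, n = m + 2 := ⟨n - 2, by omega⟩
  have hexp : α * ((↑(m + 2) : ℝ) - 2) - ↑(m + 2) = α * m - m - (2 : ℕ) := by push_cast; ring
  simp only [hexp, Real.rpow_sub_natCast hs.ne', Real.rpow_mul_natCast hs.le,
    Nat.add_sub_cancel, show m + 2 - 1 = m + 1 by omega]
  generalize 1 - (p.2 / (p.1 - 1) ^ α) ^ 2 = Q
  generalize p.1 - 1 = s at hs hA ⊢
  generalize s ^ α = A at hA ⊢
  simp only [mul_pow, div_pow]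
  field_simp
  ring

lemma one_sub_div_sq_mem_Icc {t A : ℝ} (ht : |t| ≤ A) : 1 - (t / A) ^ 2 ∈ Icc 0 1 := by
  have hq : (t / A) ^ 2 ≤ 1 := by
    rw [div_pow]
    exact div_le_one_of_le₀ (sq_le_sq' (neg_le_of_abs_le ht) (le_of_abs_le ht)) (sq_nonneg A)
  constructor <;> nlinarith [sq_nonneg (t / A)]

lemma mul_rpow_mul_one_sub_div_sq_le {α β K R : ℝ} (k j : ℕ) (hK : 0 ≤ K) (hβ : 0 ≤ β)
    {p : ℝ × ℝ} (hp : 1 < p.1) (hpR : p.1 ≤ R) (ht : |p.2| ≤ (p.1 - 1) ^ α) :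
    K * (p.1 - 1) ^ β * (1 - (p.2 / (p.1 - 1) ^ α) ^ 2) ^ k / p.1 ^ j ≤ K * (R - 1) ^ β := by
  obtain ⟨hQ0, hQ1⟩ := one_sub_div_sq_mem_Icc ht
  have hs : 0 ≤ p.1 - 1 := by linarith
  calc K * (p.1 - 1) ^ β * (1 - (p.2 / (p.1 - 1) ^ α) ^ 2) ^ k / p.1 ^ j
      ≤ K * (p.1 - 1) ^ β * (1 - (p.2 / (p.1 - 1) ^ α) ^ 2) ^ k :=
        div_le_self (by positivity) (one_le_pow₀ hp.le)
    _ ≤ K * (p.1 - 1) ^ β := mul_le_of_le_one_right (by positivity) (pow_le_one₀ hQ0 hQ1)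
    _ ≤ K * (R - 1) ^ β := by gcongr

/-- for n ≥ 3 and α ≥ n/(n−2), the function
U(r,xₙ) = h(r)^α + h(r)^{−α} xₙ² (h(r) = (r−1)₊) satisfies, in
{r > 1, |xₙ| < h(r)^α},
det D²u = 2α^{n−1}(α−1) h(r)^{α(n−2)−n} (1 − (xₙ/h(r)^α)²)^{n−1} / r^{n−2},
and this quantity is locally bounded. -/
theorem stmt_11 (n : ℕ) (hn : 3 ≤ n) (α : ℝ) (hα : (n : ℝ) / ((n : ℝ) - 2) ≤ α)
    (h : ℝ → ℝ) (hh : ∀ r : ℝ, h r = max (r - 1) 0)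
    (U : ℝ × ℝ → ℝ)
    (hU : ∀ p : ℝ × ℝ, |p.2| < h p.1 ^ α →
      U p = h p.1 ^ α + h p.1 ^ (-α) * p.2 ^ 2) :
    (∀ p : ℝ × ℝ, 1 < p.1 → |p.2| < h p.1 ^ α →
        cylDet n U p =
          2 * α ^ (n - 1) * (α - 1) * h p.1 ^ (α * ((n : ℝ) - 2) - n) *
            (1 - (p.2 / h p.1 ^ α) ^ 2) ^ (n - 1) / p.1 ^ (n - 2)) ∧
    (∀ R : ℝ, 1 < R → ∃ C : ℝ, ∀ p : ℝ × ℝ, 1 < p.1 → p.1 ≤ R → |p.2| < h p.1 ^ α →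
        2 * α ^ (n - 1) * (α - 1) * h p.1 ^ (α * ((n : ℝ) - 2) - n) *
            (1 - (p.2 / h p.1 ^ α) ^ 2) ^ (n - 1) / p.1 ^ (n - 2) ≤ C) := by
  have hh1 (r : ℝ) (hr : 1 < r) : h r = r - 1 := by rw [hh]; exact max_eq_left (by linarith)
  refine ⟨fun p hp ht => ?_, fun R _ => ?_⟩
  · have hcont : ContinuousAt (fun q : ℝ × ℝ => h q.1 ^ α) p := by
      have : Continuous h := by rw [funext hh]; fun_prop
      refine (this.continuousAt.comp continuousAt_fst).rpow_const (Or.inl ?_)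
      rw [Function.comp_apply, hh1 _ hp]; linarith
    have hUV : U =ᶠ[𝓝 p] fun q => (q.1 - 1) ^ α + (q.1 - 1) ^ (-α) * q.2 ^ 2 := by
      filter_upwards [(continuous_fst.tendsto p).eventually (lt_mem_nhds hp),
        continuous_snd.abs.continuousAt.eventually_lt hcont ht] with q hq hqt
      rw [hU q hqt, hh1 _ hq]
    rw [cylDet_congr_of_eventuallyEq n hUV, cylDet_sub_one_rpow_add_mul_sq α (by omega) hp, hh1 _ hp]
  · have hn2 : (0 : ℝ) < n - 2 := by
      have : (3 : ℝ) ≤ n := by exact_mod_cast hn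
      linarith
    have hβ : 0 ≤ α * ((n : ℝ) - 2) - n := by rw [div_le_iff₀ hn2] at hα; linarith
    have hα1 : 1 ≤ α := by nlinarith
    refine ⟨2 * α ^ (n - 1) * (α - 1) * (R - 1) ^ (α * ((n : ℝ) - 2) - n),
      fun p hp hpR ht => ?_⟩
    rw [hh1 _ hp] at ht ⊢
    exact mul_rpow_mul_one_sub_div_sq_le _ _ (by positivity) hβ hp hpR ht.le
end

section
/- The function u(x',x_n) from the higher-dimensional example is convex on ℝⁿ and its gradient is continuous across the hypersurface {|x_n| = h(r)^α} away from {r = 1, x_n = 0}. -/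
open Filter Topology Set

lemma sqplus_hasDerivAt (q : ℝ) :
    HasDerivAt (fun t : ℝ => max t 0 ^ 2) (2 * max q 0) q := by
  rcases lt_trichotomy q 0 with hq | rfl | hq
  · have hev : (fun t : ℝ => max t 0 ^ 2) =ᶠ[𝓝 q] fun _ => (0 : ℝ) := by
      filter_upwards [Iio_mem_nhds hq] with t ht
      rw [Set.mem_Iio] at ht
      simp [max_eq_right (le_of_lt ht)]
    have : HasDerivAt (fun _ : ℝ => (0 : ℝ)) 0 q := hasDerivAt_const q 0
    have h2 := this.congr_of_eventuallyEq hev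
    simpa [max_eq_right (le_of_lt hq)] using h2
  · rw [hasDerivAt_iff_isLittleO, Asymptotics.isLittleO_iff]
    intro c hc
    filter_upwards [Metric.ball_mem_nhds (0 : ℝ) hc] with t ht
    rw [Metric.mem_ball, Real.dist_eq, sub_zero] at ht
    have h1 : max t 0 ≤ |t| := max_le (le_abs_self t) (abs_nonneg t)
    have h2 : 0 ≤ max t 0 := le_max_right _ _
    have h3 : max t 0 ^ 2 ≤ |t| * |t| := by nlinarith
    simp only [max_self, mul_zero, smul_zero, sub_zero, Real.norm_eq_abs]
    have h4 : |max t 0 ^ 2 - 0 ^ 2| = max t 0 ^ 2 := by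
      rw [abs_of_nonneg] <;> nlinarith
    rw [h4]
    nlinarith [abs_nonneg t]
  · have hev : (fun t : ℝ => max t 0 ^ 2) =ᶠ[𝓝 q] fun t => t ^ 2 := by
      filter_upwards [Ioi_mem_nhds hq] with t ht
      rw [Set.mem_Ioi] at ht
      simp [max_eq_left (le_of_lt ht)]
    have : HasDerivAt (fun t : ℝ => t ^ 2) (2 * q) q := by
      simpa using hasDerivAt_pow 2 q
    have h2 := this.congr_of_eventuallyEq hev
    simpa [max_eq_left (le_of_lt hq)] using h2

lemma sqplus_contDiff : ContDiff ℝ 1 (fun t : ℝ => max t 0 ^ 2) := by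
  rw [contDiff_one_iff_deriv]
  refine ⟨fun q => (sqplus_hasDerivAt q).differentiableAt, ?_⟩
  have : deriv (fun t : ℝ => max t 0 ^ 2) = fun q => 2 * max q 0 :=
    funext fun q => (sqplus_hasDerivAt q).deriv
  rw [this]
  exact continuous_const.mul (continuous_id.max continuous_const)

set_option maxHeartbeats 2000000 in
/-- the higher-dimensional example u (on ℝⁿ = ℝ^{n−1} × ℝ, n = m+1 ≥ 3)
is convex, and its gradient is continuous at each point of the hypersurface
{|xₙ| = h(r)^α} (with r ≥ 1) away from the singular set {r = 1, xₙ = 0}. -/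
theorem stmt_12 (m : ℕ) (hm : 2 ≤ m) (α : ℝ)
    (hα : ((m : ℝ) + 1) / ((m : ℝ) - 1) ≤ α)
    (h : ℝ → ℝ) (hh : ∀ r : ℝ, h r = max (r - 1) 0)
    (u : EuclideanSpace ℝ (Fin m) × ℝ → ℝ)
    (hu : ∀ p : EuclideanSpace ℝ (Fin m) × ℝ,
      u p = if |p.2| < h ‖p.1‖ ^ α
        then h ‖p.1‖ ^ α + h ‖p.1‖ ^ (-α) * p.2 ^ 2
        else 2 * |p.2|) :
    ConvexOn ℝ Set.univ u ∧
    ∀ p : EuclideanSpace ℝ (Fin m) × ℝ,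
      1 ≤ ‖p.1‖ → |p.2| = h ‖p.1‖ ^ α → ¬(‖p.1‖ = 1 ∧ p.2 = 0) →
      ContinuousAt (fderiv ℝ u) p := by
  have hm2 : (2 : ℝ) ≤ (m : ℝ) := by exact_mod_cast hm
  have hα1 : (1 : ℝ) ≤ α := by
    refine le_trans ?_ hα
    rw [le_div_iff₀ (by linarith : (0:ℝ) < (m:ℝ) - 1)]
    linarith
  have hα0 : (0 : ℝ) < α := lt_of_lt_of_le one_pos hα1
  set A : EuclideanSpace ℝ (Fin m) × ℝ → ℝ := fun q => max (‖q.1‖ - 1) 0 ^ α with hA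
  have hA0 : ∀ q, 0 ≤ A q := fun q => Real.rpow_nonneg (le_max_right _ _) α
  have hu' : ∀ q, u q = if |q.2| < A q then A q + (A q)⁻¹ * q.2 ^ 2 else 2 * |q.2| := by
    intro q
    rw [hu, hh]
    by_cases hc : |q.2| < max (‖q.1‖ - 1) 0 ^ α
    · rw [if_pos hc, if_pos hc, Real.rpow_neg (le_max_right _ _)]
    · rw [if_neg hc, if_neg hc]
  -- convexity of the profile functions
  have hφ : ConvexOn ℝ Set.univ (fun t : ℝ => max t 0 ^ α) := by
    refine ⟨convex_univ, fun x _ y _ a b ha hb hab => ?_⟩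
    simp only [smul_eq_mul]
    have h1 : max (a * x + b * y) 0 ≤ a * max x 0 + b * max y 0 := by
      apply max_le
      · exact add_le_add (mul_le_mul_of_nonneg_left (le_max_left _ _) ha)
          (mul_le_mul_of_nonneg_left (le_max_left _ _) hb)
      · positivity
    calc max (a * x + b * y) 0 ^ α
        ≤ (a * max x 0 + b * max y 0) ^ α :=
          Real.rpow_le_rpow (le_max_right _ _) h1 hα0.le
      _ ≤ a * max x 0 ^ α + b * max y 0 ^ α := by
          have := (convexOn_rpow hα1).2 (Set.mem_Ici.2 (le_max_right x 0))
            (Set.mem_Ici.2 (le_max_right y 0)) ha hb hab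
          simpa [smul_eq_mul] using this
  have hψ : ConvexOn ℝ Set.univ (fun t : ℝ => max (t - 1) 0 ^ α) := by
    refine ⟨convex_univ, fun x _ y _ a b ha hb hab => ?_⟩
    have h2 := hφ.2 (Set.mem_univ (x - 1)) (Set.mem_univ (y - 1)) ha hb hab
    simp only [smul_eq_mul] at h2 ⊢
    have he : a * (x - 1) + b * (y - 1) = a * x + b * y - 1 := by linarith
    rw [he] at h2
    exact h2
  have hψmono : Monotone (fun t : ℝ => max (t - 1) 0 ^ α) := by
    intro s t hst
    exact Real.rpow_le_rpow (le_max_right _ _)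
      (max_le_max (by linarith) le_rfl) hα0.le
  have hnorm : ConvexOn ℝ Set.univ
      (fun q : EuclideanSpace ℝ (Fin m) × ℝ => ‖q.1‖) := by
    refine ⟨convex_univ, fun x _ y _ a b ha hb hab => ?_⟩
    simp only [smul_eq_mul]
    calc ‖(a • x + b • y).1‖ = ‖a • x.1 + b • y.1‖ := rfl
      _ ≤ ‖a • x.1‖ + ‖b • y.1‖ := norm_add_le _ _
      _ = a * ‖x.1‖ + b * ‖y.1‖ := by
          rw [norm_smul, norm_smul, Real.norm_of_nonneg ha, Real.norm_of_nonneg hb]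
  have hconvA : ConvexOn ℝ Set.univ A := by
    refine ⟨convex_univ, fun x _ y _ a b ha hb hab => ?_⟩
    have hn := hnorm.2 (Set.mem_univ x) (Set.mem_univ y) ha hb hab
    simp only [smul_eq_mul] at hn ⊢
    calc A (a • x + b • y) = max (‖(a • x + b • y).1‖ - 1) 0 ^ α := rfl
      _ ≤ max ((a * ‖x.1‖ + b * ‖y.1‖) - 1) 0 ^ α := hψmono hn
      _ ≤ a * max (‖x.1‖ - 1) 0 ^ α + b * max (‖y.1‖ - 1) 0 ^ α := by
          have := hψ.2 (Set.mem_univ ‖x.1‖) (Set.mem_univ ‖y.1‖) ha hb hab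
          simpa [smul_eq_mul] using this
      _ = a * A x + b * A y := rfl
  -- the linear minorants
  set G : ℝ → EuclideanSpace ℝ (Fin m) × ℝ → ℝ :=
    fun L q => L * q.2 + (1 - L ^ 2 / 4) * A q with hG
  have hGconv : ∀ L : ℝ, -2 ≤ L → L ≤ 2 → ConvexOn ℝ Set.univ (G L) := by
    intro L hL1 hL2
    refine ⟨convex_univ, fun x _ y _ a b ha hb hab => ?_⟩
    have hc : 0 ≤ 1 - L ^ 2 / 4 := by nlinarith
    have hAz := hconvA.2 (Set.mem_univ x) (Set.mem_univ y) ha hb hab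
    simp only [smul_eq_mul] at hAz ⊢
    have hz2 : (a • x + b • y).2 = a * x.2 + b * y.2 := rfl
    have key : (1 - L ^ 2 / 4) * A (a • x + b • y)
        ≤ (1 - L ^ 2 / 4) * (a * A x + b * A y) :=
      mul_le_mul_of_nonneg_left hAz hc
    simp only [hG, hz2]
    nlinarith [key]
  have hub : ∀ L : ℝ, -2 ≤ L → L ≤ 2 → ∀ q, G L q ≤ u q := by
    intro L hL1 hL2 q
    rw [hu' q]
    simp only [hG]
    split_ifs with hc
    · have hT : 0 < A q := lt_of_le_of_lt (abs_nonneg _) hc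
      have habs := abs_lt.1 hc
      have key : (A q)⁻¹ * q.2 ^ 2 * A q = q.2 ^ 2 := by
        field_simp
      nlinarith [sq_nonneg (q.2 - L * A q / 2), hT, key,
        inv_nonneg.2 (hA0 q)]
    · push_neg at hc
      rcases le_or_gt 0 q.2 with hq | hq
      · rw [abs_of_nonneg hq] at hc ⊢
        nlinarith [mul_nonneg (by linarith : (0:ℝ) ≤ 2 - L) (by linarith : 0 ≤ q.2 - A q),
          mul_nonneg (hA0 q) (sq_nonneg (1 - L / 2))]
      · rw [abs_of_neg hq] at hc ⊢
        nlinarith [mul_nonneg (by linarith : (0:ℝ) ≤ 2 + L) (by linarith : 0 ≤ -q.2 - A q),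
          mul_nonneg (hA0 q) (sq_nonneg (1 + L / 2))]
  have hex : ∀ q, ∃ L : ℝ, -2 ≤ L ∧ L ≤ 2 ∧ u q = G L q := by
    intro q
    rw [hu' q]
    simp only [hG]
    split_ifs with hc
    · have hT : 0 < A q := lt_of_le_of_lt (abs_nonneg _) hc
      have habs := abs_lt.1 hc
      refine ⟨2 * q.2 / A q, ?_, ?_, ?_⟩
      · rw [le_div_iff₀ hT]; linarith [habs.1]
      · rw [div_le_iff₀ hT]; linarith [habs.2]
      · field_simp
        ring
    · rcases le_or_gt 0 q.2 with hq | hq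
      · exact ⟨2, by norm_num, by norm_num, by rw [abs_of_nonneg hq]; ring⟩
      · exact ⟨-2, by norm_num, by norm_num, by rw [abs_of_neg hq]; ring⟩
  constructor
  · refine ⟨convex_univ, fun x _ y _ a b ha hb hab => ?_⟩
    obtain ⟨L, hL1, hL2, hLeq⟩ := hex (a • x + b • y)
    have h1 := (hGconv L hL1 hL2).2 (Set.mem_univ x) (Set.mem_univ y) ha hb hab
    have h2 := hub L hL1 hL2 x
    have h3 := hub L hL1 hL2 y
    simp only [smul_eq_mul] at h1 ⊢
    calc u (a • x + b • y) = G L (a • x + b • y) := hLeq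
      _ ≤ a * G L x + b * G L y := h1
      _ ≤ a * u x + b * u y :=
        add_le_add (mul_le_mul_of_nonneg_left h2 ha) (mul_le_mul_of_nonneg_left h3 hb)
  · -- gradient continuity
    intro p hr habs hsing
    have hr1 : (1 : ℝ) < ‖p.1‖ := by
      rcases lt_or_eq_of_le hr with h1 | h1
      · exact h1
      · exfalso
        apply hsing
        refine ⟨h1.symm, ?_⟩
        have : h ‖p.1‖ ^ α = 0 := by
          rw [hh, ← h1]
          simp [Real.zero_rpow hα0.ne']
        rw [this] at habs
        exact abs_eq_zero.1 habs
    have hTpos : (0 : ℝ) < (‖p.1‖ - 1) ^ α :=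
      Real.rpow_pos_of_pos (by linarith) α
    have hp2 : p.2 ≠ 0 := by
      intro h0
      have : h ‖p.1‖ ^ α = 0 := by rw [← habs, h0, abs_zero]
      rw [hh, max_eq_left (by linarith : (0:ℝ) ≤ ‖p.1‖ - 1)] at this
      exact hTpos.ne' this
    set s : ℝ := if 0 < p.2 then 1 else -1 with hs
    have hs1 : s = 1 ∨ s = -1 := by
      by_cases h0 : 0 < p.2 <;> simp [hs, h0]
    have hs2 : s ^ 2 = 1 := by rcases hs1 with h1 | h1 <;> rw [h1] <;> norm_num
    have hsp : 0 < s * p.2 := by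
      by_cases h0 : 0 < p.2
      · simp only [hs, if_pos h0]; linarith
      · simp only [hs, if_neg h0]
        push_neg at h0
        rcases lt_or_eq_of_le h0 with h2 | h2
        · nlinarith
        · exact absurd h2 hp2
    set V : Set (EuclideanSpace ℝ (Fin m) × ℝ) :=
      {x | 1 < ‖x.1‖ ∧ 0 < s * x.2} with hV
    have hVopen : IsOpen V := by
      refine IsOpen.inter ?_ ?_
      · exact isOpen_lt continuous_const (continuous_norm.comp continuous_fst)
      · exact isOpen_lt continuous_const (continuous_const.mul continuous_snd)
    have hpV : p ∈ V := ⟨hr1, hsp⟩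
    have hVnhds : V ∈ 𝓝 p := hVopen.mem_nhds hpV
    set F : EuclideanSpace ℝ (Fin m) × ℝ → ℝ := fun x =>
      2 * s * x.2 + (‖x.1‖ - 1) ^ (-α) * max ((‖x.1‖ - 1) ^ α - s * x.2) 0 ^ 2 with hF
    have habs2 : ∀ x : EuclideanSpace ℝ (Fin m) × ℝ, 0 < s * x.2 → |x.2| = s * x.2 := by
      intro x hx
      rcases hs1 with h1 | h1 <;> rw [h1] at hx ⊢
      · rw [one_mul] at hx ⊢; exact abs_of_pos hx
      · have : x.2 < 0 := by nlinarith
        rw [abs_of_neg this]; ring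
    have huF : ∀ x ∈ V, u x = F x := by
      rintro x ⟨hx1, hx2⟩
      have ht : (0 : ℝ) < ‖x.1‖ - 1 := by linarith
      have hmax : max (‖x.1‖ - 1) 0 = ‖x.1‖ - 1 := max_eq_left ht.le
      have hAB : (‖x.1‖ - 1) ^ α * (‖x.1‖ - 1) ^ (-α) = 1 := by
        rw [← Real.rpow_add ht]; simp
      have habsx := habs2 x hx2
      rw [hu x, hh, hmax, habsx]
      split_ifs with hc
      · have hmax2 : max ((‖x.1‖ - 1) ^ α - s * x.2) 0 = (‖x.1‖ - 1) ^ α - s * x.2 :=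
          max_eq_left (by linarith)
        simp only [hF, hmax2]
        linear_combination (2 * s * x.2 - (‖x.1‖ - 1) ^ α) * hAB -
          ((‖x.1‖ - 1) ^ (-α) * x.2 ^ 2) * hs2
      · push_neg at hc
        have hmax2 : max ((‖x.1‖ - 1) ^ α - s * x.2) 0 = 0 :=
          max_eq_right (by linarith)
        simp only [hF, hmax2]
        ring
    have huF' : u =ᶠ[𝓝 p] F := eventuallyEq_of_mem hVnhds huF
    have hFC1 : ContDiffOn ℝ 1 F V := by
      intro x hx
      apply ContDiffAt.contDiffWithinAt
      obtain ⟨hx1, hx2⟩ := hx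
      have hone : x.1 ≠ 0 := by
        intro h0
        rw [h0, norm_zero] at hx1
        linarith
    -- continue
      have hnormC : ContDiffAt ℝ 1 (fun y : EuclideanSpace ℝ (Fin m) × ℝ => ‖y.1‖) x :=
        contDiffAt_fst.norm ℝ hone
      have hgC : ContDiffAt ℝ 1 (fun y : EuclideanSpace ℝ (Fin m) × ℝ => ‖y.1‖ - 1) x :=
        hnormC.sub contDiffAt_const
      have hgx : ‖x.1‖ - 1 ≠ 0 := ne_of_gt (by linarith)
      have hA' : ContDiffAt ℝ 1 (fun y : EuclideanSpace ℝ (Fin m) × ℝ => (‖y.1‖ - 1) ^ α) x :=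
        hgC.rpow_const_of_ne hgx
      have hB' : ContDiffAt ℝ 1 (fun y : EuclideanSpace ℝ (Fin m) × ℝ => (‖y.1‖ - 1) ^ (-α)) x :=
        hgC.rpow_const_of_ne hgx
      have hsnd : ContDiffAt ℝ 1 (fun y : EuclideanSpace ℝ (Fin m) × ℝ => y.2) x :=
        contDiffAt_snd
      have harg : ContDiffAt ℝ 1
          (fun y : EuclideanSpace ℝ (Fin m) × ℝ => (‖y.1‖ - 1) ^ α - s * y.2) x :=
        hA'.sub (contDiffAt_const.mul hsnd)
      have hQ : ContDiffAt ℝ 1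
          (fun y : EuclideanSpace ℝ (Fin m) × ℝ => max ((‖y.1‖ - 1) ^ α - s * y.2) 0 ^ 2) x :=
        sqplus_contDiff.contDiffAt.comp x harg
      exact (contDiffAt_const.mul hsnd).add (hB'.mul hQ)
    have hfderivF : ContinuousOn (fderiv ℝ F) V :=
      hFC1.continuousOn_fderiv_of_isOpen hVopen le_rfl
    have hcontF : ContinuousAt (fderiv ℝ F) p := hfderivF.continuousAt hVnhds
    exact hcontF.congr (huF'.fderiv).symm
end

section
/- For α > 0, the function u₀(x₁,x₂) = x₁^{α+1}e^{−1/x₁^α} + x₁^{α+1}e^{1/x₁^α}x₂² satisfies, at points with x₂² = s² h(x₁)² e^{−2/x₁^α} (s² < 1), det D²u₀ = 2α²{(1−s²) + (α+1)x₁^α(1+s²)/α} + O(x₁^{2α}) as x₁ → 0⁺; in particular det D²u₀ is positive and bounded near the origin in the cusp {|x₂| < h(x₁)e^{−1/x₁^α}}. -/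
/-!
Write u₀(x) = f(x₁) + g(x₁) x₂² with f, g = x^{α+1} e^{∓x^{-α}}, so that
det D²u₀ = 2g (f'' + g'' x₂²) - 4 (g' x₂)². With a = x₁^α and m = (x₂ e^{1/x₁^α})² the
exponentials cancel and the determinant is affine in m with coefficients polynomial in a.
The cusp is exactly m < h(x₁)² = (α + (α+1)a)/(α − (α+1)a) =: r, and writing m = σ r with
σ ∈ [0, 1] one finds det D²u₀ = 2α²((1 − σ) + (α+1)a(1 + σ)/α) + a² R with 0 ≤ R bounded
for small a. Taking σ = s² gives the expansion; the main term is positive and bounded.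
-/

open Asymptotics Real

/-- The Hessian determinant of u : ℝ × ℝ → ℝ at p, via iterated Fréchet derivatives. -/
noncomputable def detD2 (u : ℝ × ℝ → ℝ) (p : ℝ × ℝ) : ℝ :=
  fderiv ℝ (fun x => fderiv ℝ u x (1, 0)) p (1, 0) *
      fderiv ℝ (fun x => fderiv ℝ u x (0, 1)) p (0, 1) -
    fderiv ℝ (fun x => fderiv ℝ u x (0, 1)) p (1, 0) *
      fderiv ℝ (fun x => fderiv ℝ u x (1, 0)) p (0, 1)

open Filter Topology

noncomputable def expWeight (α c x : ℝ) : ℝ := x ^ (α + 1) * exp (c / x ^ α)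

noncomputable def expWeightDeriv (α c x : ℝ) : ℝ := exp (c / x ^ α) * ((α + 1) * x ^ α - c * α)

section ExpWeight

variable (α c : ℝ) {x : ℝ}

theorem hasDerivAt_rpow_const_of_pos (hx : 0 < x) :
    HasDerivAt (fun y => y ^ α) (α * x ^ α / x) x := by
  simpa [rpow_sub_one hx.ne', mul_div_assoc] using
    Real.hasDerivAt_rpow_const (x := x) (p := α) (Or.inl hx.ne')

theorem hasDerivAt_exp_div_rpow (hx : 0 < x) :
    HasDerivAt (fun y => exp (c / y ^ α)) (-(c * α) * exp (c / x ^ α) / (x * x ^ α)) x := by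
  have hxα : 0 < x ^ α := rpow_pos_of_pos hx α
  refine ((hasDerivAt_const x c).fun_div (hasDerivAt_rpow_const_of_pos α hx)
    hxα.ne').exp.congr_deriv ?_
  field_simp
  ring

theorem hasDerivAt_expWeight (hx : 0 < x) :
    HasDerivAt (expWeight α c) (expWeightDeriv α c x) x := by
  have hxα : 0 < x ^ α := rpow_pos_of_pos hx α
  have hpow : HasDerivAt (fun y => y ^ (α + 1)) ((α + 1) * x ^ α) x := by
    simpa using Real.hasDerivAt_rpow_const (x := x) (p := α + 1) (Or.inl hx.ne')
  refine (hpow.fun_mul (hasDerivAt_exp_div_rpow α c hx)).congr_deriv ?_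
  rw [expWeightDeriv, rpow_add_one hx.ne']
  field_simp
  ring

theorem hasDerivAt_expWeightDeriv (hx : 0 < x) :
    HasDerivAt (expWeightDeriv α c)
      (α * exp (c / x ^ α) / (x * x ^ α) *
        ((α + 1) * (x ^ α) ^ 2 - c * (α + 1) * x ^ α + c ^ 2 * α)) x := by
  have hxα : 0 < x ^ α := rpow_pos_of_pos hx α
  refine ((hasDerivAt_exp_div_rpow α c hx).fun_mul
    (((hasDerivAt_rpow_const_of_pos α hx).const_mul (α + 1)).sub_const (c * α))).congr_deriv ?_
  field_simp
  ring

end ExpWeight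

section Separable

variable {φ ψ χ : ℝ → ℝ} {φ' ψ' χ' : ℝ} {q : ℝ × ℝ}

theorem fderiv_add_mul_sep (hφ : HasDerivAt φ φ' q.1) (hψ : HasDerivAt ψ ψ' q.1)
    (hχ : HasDerivAt χ χ' q.2) :
    fderiv ℝ (fun x : ℝ × ℝ => φ x.1 + ψ x.1 * χ x.2) q (1, 0) = φ' + ψ' * χ q.2 ∧
      fderiv ℝ (fun x : ℝ × ℝ => φ x.1 + ψ x.1 * χ x.2) q (0, 1) = ψ q.1 * χ' := by
  have h : HasFDerivAt (fun x : ℝ × ℝ => φ x.1 + ψ x.1 * χ x.2)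
      (φ' • ContinuousLinearMap.fst ℝ ℝ ℝ + (ψ q.1 • χ' • ContinuousLinearMap.snd ℝ ℝ ℝ +
        χ q.2 • ψ' • ContinuousLinearMap.fst ℝ ℝ ℝ)) q :=
    (hφ.comp_hasFDerivAt q hasFDerivAt_fst).add
      ((hψ.comp_hasFDerivAt q hasFDerivAt_fst).mul (hχ.comp_hasFDerivAt q hasFDerivAt_snd))
  rw [h.fderiv]
  constructor
  · simp [mul_comm]
  · simp

end Separable

theorem detD2_add_mul_sq {f f' g g' : ℝ → ℝ} {f'' g'' : ℝ} {p : ℝ × ℝ}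
    (hf : ∀ᶠ x in 𝓝 p.1, HasDerivAt f (f' x) x) (hf' : HasDerivAt f' f'' p.1)
    (hg : ∀ᶠ x in 𝓝 p.1, HasDerivAt g (g' x) x) (hg' : HasDerivAt g' g'' p.1) :
    detD2 (fun x => f x.1 + g x.1 * x.2 ^ 2) p =
      2 * g p.1 * (f'' + g'' * p.2 ^ 2) - 4 * (g' p.1 * p.2) ^ 2 := by
  have hsq (y : ℝ) : HasDerivAt (fun y : ℝ => y ^ 2) (2 * y) y := by
    simpa using hasDerivAt_pow 2 y
  have hlin (y : ℝ) : HasDerivAt (fun y : ℝ => 2 * y) 2 y := by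
    simpa using (hasDerivAt_id y).const_mul 2
  have hnear : ∀ᶠ q in 𝓝 p, HasDerivAt f (f' q.1) q.1 ∧ HasDerivAt g (g' q.1) q.1 :=
    continuous_fst.continuousAt.eventually (hf.and hg)
  have hD1 : (fun q => fderiv ℝ (fun x => f x.1 + g x.1 * x.2 ^ 2) q (1, 0)) =ᶠ[𝓝 p]
      fun q => f' q.1 + g' q.1 * q.2 ^ 2 :=
    hnear.mono fun q hq => (fderiv_add_mul_sep hq.1 hq.2 (hsq q.2)).1
  have hD2 : (fun q => fderiv ℝ (fun x => f x.1 + g x.1 * x.2 ^ 2) q (0, 1)) =ᶠ[𝓝 p]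
      fun q => (fun _ => 0 : ℝ → ℝ) q.1 + g q.1 * (2 * q.2) :=
    hnear.mono fun q hq => by simpa using (fderiv_add_mul_sep hq.1 hq.2 (hsq q.2)).2
  have hD11 := fderiv_add_mul_sep hf' hg' (hsq p.2)
  have hD22 := fderiv_add_mul_sep (hasDerivAt_const p.1 0) hg.self_of_nhds (hlin p.2)
  rw [detD2, hD1.fderiv_eq, hD2.fderiv_eq, hD11.1, hD11.2, hD22.1, hD22.2]
  ring

noncomputable def cuspRatio (α a : ℝ) : ℝ := (1 + (α + 1) * a / α) / (1 - (α + 1) * a / α)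

noncomputable def hessDet (α a m : ℝ) : ℝ :=
  2 * α * (α + (α + 1) * a + (α + 1) * a ^ 2) +
    m * (2 * α * (α - (α + 1) * a + (α + 1) * a ^ 2) - 4 * ((α + 1) * a - α) ^ 2)

theorem exp_neg_div_mul_exp_div (a : ℝ) : exp (-1 / a) * exp (1 / a) = 1 := by
  rw [← exp_add, neg_div, neg_add_cancel, exp_zero]

theorem detD2_expWeight (α : ℝ) {p : ℝ × ℝ} (hp : 0 < p.1) :
    detD2 (fun x => expWeight α (-1) x.1 + expWeight α 1 x.1 * x.2 ^ 2) p =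
      hessDet α (p.1 ^ α) ((p.2 * exp (1 / p.1 ^ α)) ^ 2) := by
  have hnear : ∀ c, ∀ᶠ x in 𝓝 p.1, HasDerivAt (expWeight α c) (expWeightDeriv α c x) x :=
    fun c => eventually_of_mem (Ioi_mem_nhds hp) fun x hx => hasDerivAt_expWeight α c hx
  rw [detD2_add_mul_sq (hnear (-1)) (hasDerivAt_expWeightDeriv α (-1) hp)
    (hnear 1) (hasDerivAt_expWeightDeriv α 1 hp)]
  have hpα : 0 < p.1 ^ α := rpow_pos_of_pos hp α
  have hE := exp_neg_div_mul_exp_div (p.1 ^ α)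
  rw [expWeight, expWeightDeriv, hessDet, rpow_add_one hp.ne']
  -- opaque exponentials, so that `field_simp` cannot rewrite `-1 / a` into `-(1 / a)`
  generalize exp (-1 / p.1 ^ α) = Em at hE ⊢
  generalize exp (1 / p.1 ^ α) = Ep at hE ⊢
  field_simp
  linear_combination (2 * α * ((α + 1) * (p.1 ^ α) ^ 2 + (α + 1) * p.1 ^ α + α)) * hE

section CuspAlgebra

variable {α a : ℝ}

theorem hessDet_mul_cuspRatio (hα : α ≠ 0) (hb : (α + 1) * a ≠ α) (σ : ℝ) :
    hessDet α a (σ * cuspRatio α a) =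
      2 * α ^ 2 * ((1 - σ) + (α + 1) * a * (1 + σ) / α) +
        a ^ 2 * (2 * α * (α + 1) + σ * (2 * α * (α + 1) * cuspRatio α a + 4 * (α + 1) ^ 2)) := by
  have hb' : α - (α + 1) * a ≠ 0 := sub_ne_zero.2 (Ne.symm hb)
  have hb'' : 1 - (α + 1) * a / α ≠ 0 := by
    rw [one_sub_div hα]; exact div_ne_zero hb' hα
  unfold hessDet cuspRatio
  field_simp
  ring

theorem cuspRatio_pos_le_three (hα : 0 < α) (ha : 0 ≤ a) (hb : (α + 1) * a ≤ α / 2) :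
    0 < cuspRatio α a ∧ cuspRatio α a ≤ 3 := by
  have hβ0 : 0 ≤ (α + 1) * a / α := by positivity
  have hβ1 : (α + 1) * a / α ≤ 1 / 2 := by
    rw [div_le_iff₀ hα]; linarith
  constructor
  · unfold cuspRatio; apply div_pos <;> linarith
  · unfold cuspRatio; rw [div_le_iff₀ (by linarith)]; linarith

theorem hessDet_mul_cuspRatio_sub_mem_Icc (hα : 0 < α) (ha : 0 < a) (hb : (α + 1) * a ≤ α / 2)
    {σ : ℝ} (hσ0 : 0 ≤ σ) (hσ1 : σ ≤ 1) :
    hessDet α a (σ * cuspRatio α a) - 2 * α ^ 2 * ((1 - σ) + (α + 1) * a * (1 + σ) / α) ∈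
      Set.Icc 0 ((8 * α * (α + 1) + 4 * (α + 1) ^ 2) * a ^ 2) := by
  obtain ⟨hr0, hr3⟩ := cuspRatio_pos_le_three hα ha.le hb
  rw [hessDet_mul_cuspRatio hα.ne' (by linarith), add_sub_cancel_left]
  have hr : 2 * α * (α + 1) * cuspRatio α a ≤ 2 * α * (α + 1) * 3 :=
    mul_le_mul_of_nonneg_left hr3 (by positivity)
  have hσr : σ * (2 * α * (α + 1) * cuspRatio α a + 4 * (α + 1) ^ 2) ≤
      2 * α * (α + 1) * cuspRatio α a + 4 * (α + 1) ^ 2 :=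
    mul_le_of_le_one_left (by positivity) hσ1
  constructor
  · positivity
  · rw [mul_comm _ (a ^ 2)]
    exact mul_le_mul_of_nonneg_left (by linarith) (sq_nonneg a)

theorem hessDet_mul_cuspRatio_pos_le (hα : 0 < α) (ha : 0 < a) (hb : (α + 1) * a ≤ α / 2)
    {σ : ℝ} (hσ0 : 0 ≤ σ) (hσ1 : σ ≤ 1) :
    0 < hessDet α a (σ * cuspRatio α a) ∧
      hessDet α a (σ * cuspRatio α a) ≤ 4 * α ^ 2 + (8 * α * (α + 1) + 4 * (α + 1) ^ 2) := by
  obtain ⟨h0, h1⟩ := hessDet_mul_cuspRatio_sub_mem_Icc hα ha hb hσ0 hσ1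
  have hβ0 : 0 < (α + 1) * a * (1 + σ) / α := by positivity
  have hβ1 : (α + 1) * a * (1 + σ) / α ≤ 1 := by
    rw [div_le_iff₀ hα]; nlinarith
  have ha1 : a ^ 2 ≤ 1 := by nlinarith
  have hT : 0 < 2 * α ^ 2 * ((1 - σ) + (α + 1) * a * (1 + σ) / α) :=
    mul_pos (by positivity) (by linarith)
  constructor
  · linarith
  · nlinarith

end CuspAlgebra

theorem sq_mul_exp_lt_of_abs_lt {y r a : ℝ} (h : |y| < √r * exp (-1 / a)) :
    (y * exp (1 / a)) ^ 2 < r := by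
  have : |y * exp (1 / a)| < √r := by
    rw [abs_mul, abs_of_pos (exp_pos _)]
    calc |y| * exp (1 / a) < √r * exp (-1 / a) * exp (1 / a) := by gcongr
      _ = √r := by rw [mul_assoc, exp_neg_div_mul_exp_div, mul_one]
  rwa [← sq_abs, ← Real.lt_sqrt (abs_nonneg _)]

theorem sq_mul_sqrt_mul_exp (s a : ℝ) {r : ℝ} (hr : 0 ≤ r) :
    (s * √r * exp (-1 / a) * exp (1 / a)) ^ 2 = s ^ 2 * r := by
  rw [mul_assoc, exp_neg_div_mul_exp_div, mul_one, mul_pow, sq_sqrt hr]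

theorem eventually_mul_rpow_le {α : ℝ} (hα : 0 < α) :
    ∀ᶠ t in 𝓝[>] 0, 0 < t ∧ (α + 1) * t ^ α ≤ α / 2 := by
  have hlim : Tendsto (fun t : ℝ => (α + 1) * t ^ α) (𝓝 0) (𝓝 0) := by
    simpa [zero_rpow hα.ne'] using
      ((continuousAt_rpow_const 0 α (Or.inr hα.le)).const_mul (α + 1)).tendsto
  exact eventually_mem_nhdsWithin.and
    (nhdsWithin_le_nhds (hlim.eventually (Iic_mem_nhds (by linarith))))

/-- for u₀ = x₁^{α+1}e^{−1/x₁^α} + x₁^{α+1}e^{1/x₁^α}x₂², on the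
curves x₂ = s·h(x₁)e^{−1/x₁^α} with s² < 1,
det D²u₀ = 2α²{(1−s²) + (α+1)x₁^α(1+s²)/α} + O(x₁^{2α}) as x₁ → 0⁺;
in particular det D²u₀ is positive and bounded near the origin in the cusp
{|x₂| < h(x₁)e^{−1/x₁^α}}. -/
theorem stmt_16 (α : ℝ) (hα : 0 < α)
    (h : ℝ → ℝ)
    (hh : ∀ t : ℝ, 0 < t → (α + 1) * t ^ α / α < 1 →
      h t = Real.sqrt ((1 + (α + 1) * t ^ α / α) / (1 - (α + 1) * t ^ α / α)))
    (u₀ : ℝ × ℝ → ℝ)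
    (hu₀ : ∀ p : ℝ × ℝ, u₀ p =
      p.1 ^ (α + 1) * Real.exp (-1 / p.1 ^ α) +
        p.1 ^ (α + 1) * Real.exp (1 / p.1 ^ α) * p.2 ^ 2) :
    (∀ s : ℝ, s ^ 2 < 1 →
      (fun t : ℝ => detD2 u₀ (t, s * h t * Real.exp (-1 / t ^ α)) -
          (2 * α ^ 2 * ((1 - s ^ 2) + (α + 1) * t ^ α * (1 + s ^ 2) / α)))
        =O[nhdsWithin 0 (Set.Ioi 0)] fun t : ℝ => t ^ (2 * α)) ∧
    ∃ ε C : ℝ, 0 < ε ∧ ∀ p : ℝ × ℝ, 0 < p.1 → p.1 < ε →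
      |p.2| < h p.1 * Real.exp (-1 / p.1 ^ α) →
      0 < detD2 u₀ p ∧ detD2 u₀ p ≤ C := by
  have hu : u₀ = fun p => expWeight α (-1) p.1 + expWeight α 1 p.1 * p.2 ^ 2 := funext hu₀
  subst hu
  have hsmall := eventually_mul_rpow_le hα
  have hh' (t : ℝ) (ht : 0 < t) (hb : (α + 1) * t ^ α ≤ α / 2) :
      h t = √(cuspRatio α (t ^ α)) :=
    hh t ht (by rw [div_lt_one hα]; linarith)
  constructor
  · intro s hs
    refine IsBigO.of_bound (8 * α * (α + 1) + 4 * (α + 1) ^ 2) ?_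
    filter_upwards [hsmall] with t ⟨ht, hb⟩
    have htα : 0 < t ^ α := rpow_pos_of_pos ht α
    obtain ⟨hr, -⟩ := cuspRatio_pos_le_three hα htα.le hb
    obtain ⟨h0, h1⟩ := hessDet_mul_cuspRatio_sub_mem_Icc hα htα hb (sq_nonneg s) hs.le
    rw [detD2_expWeight α ht, hh' t ht hb, sq_mul_sqrt_mul_exp _ _ hr.le, norm_of_nonneg h0,
      norm_of_nonneg (rpow_nonneg ht.le _), mul_comm 2 α, rpow_mul ht.le, rpow_two]
    exact h1
  · obtain ⟨ε, hε, hsub⟩ := (nhdsGT_basis (0 : ℝ)).eventually_iff.1 hsmall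
    refine ⟨ε, 4 * α ^ 2 + (8 * α * (α + 1) + 4 * (α + 1) ^ 2), hε, fun p hp hpε hy => ?_⟩
    obtain ⟨-, hb⟩ := hsub ⟨hp, hpε⟩
    have hpα : 0 < p.1 ^ α := rpow_pos_of_pos hp α
    obtain ⟨hr, -⟩ := cuspRatio_pos_le_three hα hpα.le hb
    have hm := sq_mul_exp_lt_of_abs_lt (hh' p.1 hp hb ▸ hy)
    rw [detD2_expWeight α hp, ← div_mul_cancel₀ ((p.2 * exp (1 / p.1 ^ α)) ^ 2) hr.ne']
    exact hessDet_mul_cuspRatio_pos_le hα hpα hb (by positivity) ((div_le_one hr).2 hm.le)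
end

section
/- For the barrier b_α, in the cusp Ω_{1,α} ∩ Ω (where x₁ ≤ 1/2 and x₂²e^{2/x₁^α} ≤ 1/4), the Hessian determinant satisfies det D²b_α = 2α²x₁^{−2}((1−a) + ((α−1+a(3α+1))/α)x₁^α + ((α−1−a(α+1))/α)x₁^{2α}) ≥ (3/2)α²x₁^{−2} ≥ 6α², where a = x₂²e^{2/x₁^α}. -/
open Real

/-! Near a point of the cusp, `b` coincides with `G x₁ + K x₁ * x₂ ^ 2`, where
`G t = t ^ α * exp (-1 / t ^ α)` and `K t = t ^ α * exp (1 / t ^ α)`, so its Hessian determinant is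
`(G'' + K'' x₂²) · 2K − (2K' x₂)²`. Writing `s = x₁ ^ α` and `a = x₂² e^{2/s}`, this is
`2α² x₁⁻² ((1 − a) + c₁ s + c₂ s²)`. In the cusp `a < 1/4`, so for `α ≥ 5/3` both `c₁` and `c₂`
are nonnegative and the bracket is at least `3/4`; finally `x₁ ≤ 1/2` gives `x₁⁻² ≥ 4`. -/

open Filter Topology

theorem hasDerivAt_rpow_mul_exp_div_rpow (α c : ℝ) {t : ℝ} (ht : 0 < t) :
    HasDerivAt (fun t : ℝ => t ^ α * exp (c / t ^ α))
      (α * exp (c / t ^ α) * (t ^ (α - 1) - c * t⁻¹)) t := by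
  have hpow : HasDerivAt (fun t : ℝ => t ^ α) (α * t ^ (α - 1)) t :=
    hasDerivAt_rpow_const (Or.inl ht.ne')
  have hdiv : HasDerivAt (fun t : ℝ => c / t ^ α)
      ((0 * t ^ α - c * (α * t ^ (α - 1))) / (t ^ α) ^ 2) t :=
    (hasDerivAt_const t c).div hpow (rpow_pos_of_pos ht α).ne'
  refine (hpow.mul hdiv.exp).congr_deriv ?_
  rw [rpow_sub_one ht.ne']
  field_simp
  ring

theorem hasDerivAt_deriv_rpow_mul_exp_div_rpow (α c : ℝ) {t : ℝ} (ht : 0 < t) :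
    HasDerivAt (fun t : ℝ => α * exp (c / t ^ α) * (t ^ (α - 1) - c * t⁻¹))
      (α * exp (c / t ^ α) * t⁻¹ ^ 2 *
        (c ^ 2 * α * (t ^ α)⁻¹ + c * (1 - α) + (α - 1) * t ^ α)) t := by
  have hpow : HasDerivAt (fun t : ℝ => t ^ α) (α * t ^ (α - 1)) t :=
    hasDerivAt_rpow_const (Or.inl ht.ne')
  have hdiv : HasDerivAt (fun t : ℝ => c / t ^ α)
      ((0 * t ^ α - c * (α * t ^ (α - 1))) / (t ^ α) ^ 2) t :=
    (hasDerivAt_const t c).div hpow (rpow_pos_of_pos ht α).ne'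
  have hpow' : HasDerivAt (fun t : ℝ => t ^ (α - 1)) ((α - 1) * t ^ (α - 1 - 1)) t :=
    hasDerivAt_rpow_const (Or.inl ht.ne')
  have hsub : HasDerivAt (fun t : ℝ => t ^ (α - 1) - c * t⁻¹)
      ((α - 1) * t ^ (α - 1 - 1) - c * -(t ^ 2)⁻¹) t :=
    hpow'.sub ((hasDerivAt_inv ht.ne').const_mul c)
  refine ((hdiv.exp.const_mul α).mul hsub).congr_deriv ?_
  rw [rpow_sub_one ht.ne', rpow_sub_one ht.ne', rpow_sub_one ht.ne']
  field_simp
  ring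

theorem hasFDerivAt_add_mul_comp_fst_snd {G K H : ℝ → ℝ} {g k h : ℝ} {x : ℝ × ℝ}
    (hG : HasDerivAt G g x.1) (hK : HasDerivAt K k x.1) (hH : HasDerivAt H h x.2) :
    HasFDerivAt (fun q : ℝ × ℝ => G q.1 + K q.1 * H q.2)
      ((g + k * H x.2) • ContinuousLinearMap.fst ℝ ℝ ℝ +
        (K x.1 * h) • ContinuousLinearMap.snd ℝ ℝ ℝ) x := by
  have hfst := hasFDerivAt_fst (𝕜 := ℝ) (E := ℝ) (F := ℝ) (p := x)
  have hsnd := hasFDerivAt_snd (𝕜 := ℝ) (E := ℝ) (F := ℝ) (p := x)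
  refine ((hG.comp_hasFDerivAt x hfst).add
    ((hK.comp_hasFDerivAt x hfst).mul (hH.comp_hasFDerivAt x hsnd))).congr_fderiv ?_
  ext <;> simp [mul_comm]

theorem detD2_congr {u v : ℝ × ℝ → ℝ} {p : ℝ × ℝ} (h : u =ᶠ[𝓝 p] v) :
    detD2 u p = detD2 v p := by
  have hd (w : ℝ × ℝ) : (fun x => fderiv ℝ u x w) =ᶠ[𝓝 p] fun x => fderiv ℝ v x w :=
    h.eventuallyEq_nhds.mono fun x hx =>
      show fderiv ℝ u x w = fderiv ℝ v x w by rw [hx.fderiv_eq]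
  rw [detD2, detD2, (hd (1, 0)).fderiv_eq, (hd (0, 1)).fderiv_eq]

theorem detD2_add_mul_sq_s17 {G K G' K' : ℝ → ℝ} {g'' k'' : ℝ} {p : ℝ × ℝ}
    (hG : ∀ᶠ t in 𝓝 p.1, HasDerivAt G (G' t) t) (hK : ∀ᶠ t in 𝓝 p.1, HasDerivAt K (K' t) t)
    (hG' : HasDerivAt G' g'' p.1) (hK' : HasDerivAt K' k'' p.1) :
    detD2 (fun q => G q.1 + K q.1 * q.2 ^ 2) p =
      (g'' + k'' * p.2 ^ 2) * (2 * K p.1) - (2 * K' p.1 * p.2) ^ 2 := by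
  have hnear : ∀ᶠ q in 𝓝 p, HasFDerivAt (fun q : ℝ × ℝ => G q.1 + K q.1 * q.2 ^ 2)
      ((G' q.1 + K' q.1 * q.2 ^ 2) • ContinuousLinearMap.fst ℝ ℝ ℝ +
        (K q.1 * (2 * q.2)) • ContinuousLinearMap.snd ℝ ℝ ℝ) q :=
    (continuous_fst.tendsto p).eventually (hG.and hK) |>.mono fun q hq => by
      simpa using hasFDerivAt_add_mul_comp_fst_snd hq.1 hq.2 (hasDerivAt_pow 2 q.2)
  have h10 : (fun q => fderiv ℝ (fun q : ℝ × ℝ => G q.1 + K q.1 * q.2 ^ 2) q (1, 0)) =ᶠ[𝓝 p]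
      fun q => G' q.1 + K' q.1 * q.2 ^ 2 :=
    hnear.mono fun q hq => by simp [hq.fderiv]
  have h01 : (fun q => fderiv ℝ (fun q : ℝ × ℝ => G q.1 + K q.1 * q.2 ^ 2) q (0, 1)) =ᶠ[𝓝 p]
      fun q => 0 + K q.1 * (2 * q.2) :=
    hnear.mono fun q hq => by simp [hq.fderiv]
  rw [detD2, h10.fderiv_eq, h01.fderiv_eq,
    (hasFDerivAt_add_mul_comp_fst_snd hG' hK' (hasDerivAt_pow 2 p.2)).fderiv,
    (hasFDerivAt_add_mul_comp_fst_snd (hasDerivAt_const p.1 0) hK.self_of_nhds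
      ((hasDerivAt_id' p.2).const_mul 2)).fderiv]
  simp only [add_apply, smul_apply, ContinuousLinearMap.coe_fst', ContinuousLinearMap.coe_snd',
    smul_eq_mul, mul_one, mul_zero, add_zero, zero_add]
  ring

theorem barrier_hessian_det_eq {α : ℝ} (hα : α ≠ 0) {t : ℝ} (ht : 0 < t) (y : ℝ) :
    (α * exp (-1 / t ^ α) * t⁻¹ ^ 2 *
          ((-1) ^ 2 * α * (t ^ α)⁻¹ + -1 * (1 - α) + (α - 1) * t ^ α) +
        α * exp (1 / t ^ α) * t⁻¹ ^ 2 *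
          (1 ^ 2 * α * (t ^ α)⁻¹ + 1 * (1 - α) + (α - 1) * t ^ α) * y ^ 2) *
        (2 * (t ^ α * exp (1 / t ^ α))) -
      (2 * (α * exp (1 / t ^ α) * (t ^ (α - 1) - 1 * t⁻¹)) * y) ^ 2 =
    2 * α ^ 2 * t ^ (-2 : ℝ) *
      ((1 - y ^ 2 * exp (2 / t ^ α)) +
        ((α - 1 + y ^ 2 * exp (2 / t ^ α) * (3 * α + 1)) / α) * t ^ α +
        ((α - 1 - y ^ 2 * exp (2 / t ^ α) * (α + 1)) / α) * t ^ (2 * α)) := by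
  have hexp_two : exp (2 / t ^ α) = exp (1 / t ^ α) ^ 2 := by
    rw [← exp_nat_mul]; ring_nf
  have hexp_neg : exp (-1 / t ^ α) = (exp (1 / t ^ α))⁻¹ := by
    rw [← exp_neg]; ring_nf
  rw [hexp_two, hexp_neg, rpow_neg ht.le, rpow_two, mul_comm 2 α, rpow_mul ht.le, rpow_two,
    rpow_sub_one ht.ne']
  field_simp
  ring

theorem three_quarters_le_barrier_bracket {α a s s' : ℝ} (hα : 5 / 3 ≤ α) (ha₀ : 0 ≤ a)
    (ha : a ≤ 1 / 4) (hs : 0 ≤ s) (hs' : 0 ≤ s') :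
    3 / 4 ≤ (1 - a) + ((α - 1 + a * (3 * α + 1)) / α) * s + ((α - 1 - a * (α + 1)) / α) * s' := by
  have hα₀ : 0 < α := by linarith
  have h₁ : 0 ≤ (α - 1 + a * (3 * α + 1)) / α := div_nonneg (by nlinarith) hα₀.le
  have h₂ : 0 ≤ (α - 1 - a * (α + 1)) / α := div_nonneg (by nlinarith) hα₀.le
  nlinarith [mul_nonneg h₁ hs, mul_nonneg h₂ hs']

theorem sq_mul_exp_two_mul_lt {y c : ℝ} (hy : |y| < 1 / 2 * exp (-c)) :
    y ^ 2 * exp (2 * c) < 1 / 4 := by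
  have h : |y| * exp c < 1 / 2 := by
    rwa [← lt_div_iff₀ (exp_pos c), div_eq_mul_inv, ← exp_neg]
  calc y ^ 2 * exp (2 * c) = (|y| * exp c) ^ 2 := by
        rw [mul_pow, sq_abs, ← exp_nat_mul]; norm_num
    _ < (1 / 2) ^ 2 := by gcongr
    _ = 1 / 4 := by norm_num

theorem four_le_rpow_neg_two {t : ℝ} (ht : 0 < t) (ht' : t ≤ 1 / 2) : 4 ≤ t ^ (-2 : ℝ) := by
  rw [rpow_neg ht.le, rpow_two, le_inv_comm₀ (by norm_num) (by positivity)]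
  nlinarith

/-- for the barrier b_α = x₁^α e^{−1/x₁^α} + x₁^α e^{1/x₁^α} x₂²,
in the cusp Ω_{1,α} ∩ Ω (0 < x₁ ≤ 1/2, |x₂| < ½e^{−1/x₁^α}), writing
a = x₂² e^{2/x₁^α}:
det D²b_α = 2α²x₁^{−2}((1−a) + ((α−1+a(3α+1))/α)x₁^α + ((α−1−a(α+1))/α)x₁^{2α})
≥ (3/2)α²x₁^{−2} ≥ 6α². -/
theorem stmt_17 (α : ℝ) (hα : 2 ≤ α)
    (b : ℝ × ℝ → ℝ)
    (hb : ∀ p : ℝ × ℝ, 0 < p.1 → |p.2| < (1 / 2) * Real.exp (-1 / p.1 ^ α) →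
      b p = p.1 ^ α * Real.exp (-1 / p.1 ^ α) + p.1 ^ α * Real.exp (1 / p.1 ^ α) * p.2 ^ 2) :
    ∀ p : ℝ × ℝ, 0 < p.1 → p.1 ≤ 1 / 2 → |p.2| < (1 / 2) * Real.exp (-1 / p.1 ^ α) →
      detD2 b p = 2 * α ^ 2 * p.1 ^ (-2 : ℝ) *
          ((1 - p.2 ^ 2 * Real.exp (2 / p.1 ^ α)) +
            ((α - 1 + p.2 ^ 2 * Real.exp (2 / p.1 ^ α) * (3 * α + 1)) / α) * p.1 ^ α +
            ((α - 1 - p.2 ^ 2 * Real.exp (2 / p.1 ^ α) * (α + 1)) / α) * p.1 ^ (2 * α)) ∧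
      (3 / 2) * α ^ 2 * p.1 ^ (-2 : ℝ) ≤ detD2 b p ∧
      6 * α ^ 2 ≤ detD2 b p := by
  intro p hp hp_half hy
  have hα₀ : 0 < α := by linarith
  have hb_near : b =ᶠ[𝓝 p] fun q : ℝ × ℝ =>
      q.1 ^ α * exp (-1 / q.1 ^ α) + q.1 ^ α * exp (1 / q.1 ^ α) * q.2 ^ 2 := by
    have hwidth : ContinuousAt (fun q : ℝ × ℝ => 1 / 2 * exp (-1 / q.1 ^ α)) p := by
      fun_prop (disch := positivity)
    filter_upwards [continuousAt_fst.eventually (lt_mem_nhds hp),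
      continuousAt_snd.abs.eventually_lt hwidth hy] with q hq hqy using hb q hq hqy
  have hdet := (detD2_congr hb_near).trans <| detD2_add_mul_sq_s17
    ((lt_mem_nhds hp).mono fun t ht => hasDerivAt_rpow_mul_exp_div_rpow α (-1) ht)
    ((lt_mem_nhds hp).mono fun t ht => hasDerivAt_rpow_mul_exp_div_rpow α 1 ht)
    (hasDerivAt_deriv_rpow_mul_exp_div_rpow α (-1) hp)
    (hasDerivAt_deriv_rpow_mul_exp_div_rpow α 1 hp)
  rw [barrier_hessian_det_eq hα₀.ne' hp] at hdet
  have ha : p.2 ^ 2 * exp (2 / p.1 ^ α) < 1 / 4 := by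
    simpa only [mul_one_div] using sq_mul_exp_two_mul_lt (c := 1 / p.1 ^ α) (by rwa [← neg_div])
  have hbracket := three_quarters_le_barrier_bracket (α := α) (by linarith) (by positivity) ha.le
    (rpow_nonneg hp.le α) (rpow_nonneg hp.le (2 * α))
  have hweight := four_le_rpow_neg_two hp hp_half
  have hlower : 3 / 2 * α ^ 2 * p.1 ^ (-2 : ℝ) ≤ detD2 b p := by
    rw [hdet]
    nlinarith [mul_le_mul_of_nonneg_left hbracket
      (by positivity : 0 ≤ 2 * α ^ 2 * p.1 ^ (-2 : ℝ))]
  exact ⟨hdet, hlower, by nlinarith⟩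
end
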